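/- arXiv:1302.4432 — 3 statements merged into one kernel-verified Lean document; each statement's English description precedes it below -/
import Mathlib

section
/- Let $\alpha > -1$, $\beta > 0$, $R > 0$, and set $X(t) = (1 - \log t)^{-1}$ for $t \in (0,1]$. For every $c > 1/(\alpha+1)$ there exists $\eta \geq 0$ (one can take $\eta = \max\{0, ((\beta-\alpha-1)c+1)/((\alpha+1)c-1)\}$) such that for all $D \geq e^{\eta} R$ and all $r \in (0, R]$ one has $\int_0^r t^{\alpha} X^{-\beta}(t/D)\, dt \leq c\, r^{\alpha+1} X^{-\beta}(r/D)$. -/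
open MeasureTheory Set Real

/-!
Put `L = 1 - log (r / D)` and `ε = α + 1 - 1/c > 0`. For `0 < t ≤ r` one has
`1 - log (t / D) = L + log (r / t)`, and as soon as `β ≤ L ε` the elementary bound
`L + u ≤ L exp (ε u / β)` gives `(1 - log (t / D))^β ≤ L^β (r / t)^ε`. Integrating the
majorant `L^β r^ε t^(α - ε)` over `(0, r)` yields `r^(α+1) L^β / (α + 1 - ε) = c r^(α+1) L^β`.
The choice of `η` is exactly what makes `L ≥ 1 + η` force `β ≤ L ε`.
-/

theorem rpow_add_le_rpow_mul_exp {L u β ε : ℝ} (hL : 0 < L) (hu : 0 ≤ u) (hβ : 0 < β)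
    (hβL : β ≤ L * ε) : (L + u) ^ β ≤ L ^ β * exp (ε * u) := by
  have hlin : L + u ≤ L * exp (ε * u / β) :=
    calc L + u ≤ L * (ε * u / β + 1) := by
          have : β * u ≤ L * ε * u := mul_le_mul_of_nonneg_right hβL hu
          rw [mul_add, mul_one, add_comm, ← mul_div_assoc, ← mul_assoc]
          gcongr
          rwa [le_div_iff₀ hβ, mul_comm]
      _ ≤ L * exp (ε * u / β) := by gcongr; exact add_one_le_exp _
  calc (L + u) ^ β ≤ (L * exp (ε * u / β)) ^ β := by gcongr
    _ = L ^ β * exp (ε * u) := by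
      rw [mul_rpow hL.le (exp_pos _).le, ← exp_mul, div_mul_cancel₀ _ hβ.ne']

theorem one_sub_log_div_rpow_le {t r D β ε : ℝ} (ht : 0 < t) (htr : t ≤ r) (hD : 0 < D)
    (hβ : 0 < β) (hL : 0 < 1 - log (r / D)) (hβL : β ≤ (1 - log (r / D)) * ε) :
    (1 - log (t / D)) ^ β ≤ (1 - log (r / D)) ^ β * (r / t) ^ ε := by
  have hr : 0 < r := ht.trans_le htr
  have hsplit : 1 - log (t / D) = (1 - log (r / D)) + log (r / t) := by
    rw [log_div ht.ne' hD.ne', log_div hr.ne' hD.ne', log_div hr.ne' ht.ne']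
    ring
  have hu : 0 ≤ log (r / t) := log_nonneg ((one_le_div ht).mpr htr)
  rw [hsplit, rpow_def_of_pos (div_pos hr ht), mul_comm (log _)]
  exact rpow_add_le_rpow_mul_exp hL hu hβ hβL

theorem integral_Ioo_rpow {a r : ℝ} (ha : -1 < a) (hr : 0 ≤ r) :
    ∫ t in Ioo 0 r, t ^ a = r ^ (a + 1) / (a + 1) := by
  rw [← integral_Ioc_eq_integral_Ioo, ← intervalIntegral.integral_of_le hr,
    integral_rpow (Or.inl ha), zero_rpow (by linarith), sub_zero]

theorem setIntegral_rpow_mul_one_sub_log_rpow_le {α β ε D r : ℝ} (hεα : ε < α + 1)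
    (hβ : 0 < β) (hD : 0 < D) (hr : 0 < r) (hL : 0 < 1 - log (r / D))
    (hβL : β ≤ (1 - log (r / D)) * ε) :
    ∫ t in Ioo 0 r, t ^ α * (1 - log (t / D)) ^ β
      ≤ r ^ (α + 1) / (α + 1 - ε) * (1 - log (r / D)) ^ β := by
  set L := 1 - log (r / D)
  have hαε : -1 < α - ε := by linarith
  have hnonneg : ∀ t ∈ Ioo 0 r, 0 ≤ t ^ α * (1 - log (t / D)) ^ β := by
    rintro t ⟨ht, htr⟩
    have : log (t / D) ≤ log (r / D) := log_le_log (by positivity) (by gcongr)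
    exact mul_nonneg (rpow_nonneg ht.le _) (rpow_nonneg (by linarith) _)
  have hbound : ∀ t ∈ Ioo 0 r,
      t ^ α * (1 - log (t / D)) ^ β ≤ L ^ β * r ^ ε * t ^ (α - ε) := by
    rintro t ⟨ht, htr⟩
    have hpow : t ^ α * (r / t) ^ ε = r ^ ε * t ^ (α - ε) := by
      rw [div_rpow hr.le ht.le, rpow_sub ht]
      field_simp
    calc t ^ α * (1 - log (t / D)) ^ β ≤ t ^ α * (L ^ β * (r / t) ^ ε) := by
          gcongr
          exact one_sub_log_div_rpow_le ht htr.le hD hβ hL hβL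
      _ = L ^ β * r ^ ε * t ^ (α - ε) := by rw [mul_left_comm, hpow, mul_assoc]
  have hint : IntegrableOn (fun t ↦ L ^ β * r ^ ε * t ^ (α - ε)) (Ioo 0 r) :=
    ((intervalIntegral.integrableOn_Ioo_rpow_iff hr).mpr hαε).const_mul _
  calc ∫ t in Ioo 0 r, t ^ α * (1 - log (t / D)) ^ β
      ≤ ∫ t in Ioo 0 r, L ^ β * r ^ ε * t ^ (α - ε) :=
        setIntegral_mono_of_nonneg hnonneg hbound hint
    _ = L ^ β * r ^ ε * (r ^ (α - ε + 1) / (α - ε + 1)) := by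
        rw [integral_const_mul, integral_Ioo_rpow hαε hr.le]
    _ = r ^ (α + 1) / (α + 1 - ε) * L ^ β := by
        rw [mul_div_assoc', mul_assoc, ← rpow_add hr]
        ring_nf

theorem stmt_0_general (α β R c : ℝ) (hα : -1 < α) (hβ : 0 < β)
    (hc : 1 / (α + 1) < c) :
    ∃ η : ℝ, 0 ≤ η ∧ η = max 0 (((β - α - 1) * c + 1) / ((α + 1) * c - 1)) ∧
      ∀ D : ℝ, Real.exp η * R ≤ D → ∀ r : ℝ, 0 < r → r ≤ R →
        ∫ t in Ioo (0 : ℝ) r, t ^ α * (1 - Real.log (t / D)) ^ β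
          ≤ c * r ^ (α + 1) * (1 - Real.log (r / D)) ^ β := by
  have hα1 : 0 < α + 1 := by linarith
  have hc0 : 0 < c := lt_trans (by positivity) hc
  have hd : 0 < (α + 1) * c - 1 := by
    have := (div_lt_iff₀ hα1).mp hc
    linarith
  refine ⟨_, le_max_left _ _, rfl, fun D hD r hr hrR ↦ ?_⟩
  set η := max 0 (((β - α - 1) * c + 1) / ((α + 1) * c - 1))
  have hη0 : 0 ≤ η := le_max_left _ _
  have hR : 0 < R := hr.trans_le hrR
  have hD0 : 0 < D := (by positivity : 0 < exp η * R).trans_le hD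
  have hL : 1 + η ≤ 1 - log (r / D) := by
    have hlogD : η + log R ≤ log D := by
      rw [← log_exp η, ← log_mul (exp_pos η).ne' hR.ne']
      exact log_le_log (by positivity) hD
    have hlogr : log r ≤ log R := log_le_log hr hrR
    rw [log_div hr.ne' hD0.ne']
    linarith
  have hβL : β ≤ (1 - log (r / D)) * (α + 1 - 1 / c) := by
    have hη : (β - α - 1) * c + 1 ≤ η * ((α + 1) * c - 1) :=
      (div_le_iff₀ hd).mp (le_max_right _ _)
    have hε : α + 1 - 1 / c = ((α + 1) * c - 1) / c := by field_simp
    rw [hε, mul_div_assoc', le_div_iff₀ hc0]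
    nlinarith [mul_le_mul_of_nonneg_right hL hd.le]
  have key := setIntegral_rpow_mul_one_sub_log_rpow_le (α := α)
    (by linarith [one_div_pos.mpr hc0]) hβ hD0 hr (by linarith) hβL
  rwa [sub_sub_cancel, div_div_eq_mul_div, div_one, mul_comm (r ^ _)] at key

/-- Lemma 2.5 (i): weighted logarithmic integral bound. Here `X t = (1 - log t)⁻¹`,
so `X^{-β}(t/D) = (1 - log (t/D))^β`. -/
theorem stmt_0 (α β R c : ℝ) (hα : -1 < α) (hβ : 0 < β) (hR : 0 < R)
    (hc : 1 / (α + 1) < c) :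
    ∃ η : ℝ, 0 ≤ η ∧ η = max 0 (((β - α - 1) * c + 1) / ((α + 1) * c - 1)) ∧
      ∀ D : ℝ, Real.exp η * R ≤ D → ∀ r : ℝ, 0 < r → r ≤ R →
        ∫ t in Ioo (0 : ℝ) r, t ^ α * (1 - Real.log (t / D)) ^ β
          ≤ c * r ^ (α + 1) * (1 - Real.log (r / D)) ^ β :=
  stmt_0_general α β R c hα hβ hc
end

section
/- Let $\alpha \in (-1, 0]$, $\beta > 0$, $R > 0$, and $X(t) = (1-\log t)^{-1}$ for $t \in (0,1]$. For every $c > 1/(\alpha+1)$ there exists $\eta \geq 0$ such that for all $D \geq e^{\eta} R$ and all $0 \leq y \leq x \leq R$, one has $\int_y^x t^{\alpha} X^{-\beta}(t/D)\, dt \leq c\,(x-y)^{\alpha+1} X^{-\beta}((x-y)/D)$. -/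
open MeasureTheory Set Filter Topology

/-!
Write `L t = 1 - log (t / D)`. The function `F t = c t^{α+1} L(t)^β` has derivative
`c t^α L^{β-1} ((α+1) L - β)`, which dominates the integrand `t^α L^β` as soon as
`(c(α+1) - 1) L ≥ c β`. With `η = c β / (c(α+1) - 1)` and `D ≥ e^η R` we have `L ≥ 1 + η`
on `(0, R]`, so the integral over `(y, x)` is at most `F x - F y`; at `y = 0` this uses that
`F` tends to `0 = F 0`, since `t^a` beats any power of `log t`.
Finally `x^{α+1} - y^{α+1} ≤ (x - y)^{α+1}` and the fact that `L` is decreasing give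
`F x - F y ≤ c (x - y)^{α+1} L(x - y)^β`.
-/

lemma Real.rpow_sub_rpow_le_rpow_sub {a b p : ℝ} (hb : 0 ≤ b) (hba : b ≤ a) (hp : 0 ≤ p)
    (hp1 : p ≤ 1) : a ^ p - b ^ p ≤ (a - b) ^ p := by
  have := Real.rpow_add_le_add_rpow (sub_nonneg.2 hba) hb hp hp1
  rw [sub_add_cancel] at this
  linarith

theorem setIntegral_Ioo_le_sub_of_le_deriv {f F F' : ℝ → ℝ} {a b : ℝ} (hab : a ≤ b)
    (hF : ContinuousOn F (Icc a b)) (hderiv : ∀ t ∈ Ioo a b, HasDerivAt F (F' t) t)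
    (hf : ContinuousOn f (Ioo a b)) (hf0 : ∀ t ∈ Ioo a b, 0 ≤ f t)
    (hfF' : ∀ t ∈ Ioo a b, f t ≤ F' t) :
    ∫ t in Ioo a b, f t ≤ F b - F a := by
  have hF'int : IntegrableOn F' (Ioo a b) :=
    (intervalIntegral.integrableOn_deriv_of_nonneg hF hderiv
      fun t ht => (hf0 t ht).trans (hfF' t ht)).mono_set Ioo_subset_Ioc_self
  have hfint : IntegrableOn f (Ioo a b) := by
    refine hF'int.mono' (hf.aestronglyMeasurable measurableSet_Ioo) ?_
    filter_upwards [ae_restrict_mem measurableSet_Ioo] with t ht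
    rw [Real.norm_of_nonneg (hf0 t ht)]
    exact hfF' t ht
  calc ∫ t in Ioo a b, f t ≤ ∫ t in Ioo a b, F' t :=
        setIntegral_mono_on hfint hF'int measurableSet_Ioo hfF'
    _ = ∫ t in a..b, F' t := by
        rw [intervalIntegral.integral_of_le hab, integral_Ioc_eq_integral_Ioo]
    _ = F b - F a := intervalIntegral.integral_eq_sub_of_hasDerivAt_of_le hab hF hderiv
        ((intervalIntegrable_iff_integrableOn_Ioo_of_le hab).2 hF'int)

namespace Real

lemma add_le_one_sub_log_div {η t D : ℝ} (ht : 0 < t) (h : exp η * t ≤ D) :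
    1 + η ≤ 1 - log (t / D) := by
  have hD : 0 < D := lt_of_lt_of_le (by positivity) h
  have : t / D ≤ exp (-η) := by
    rw [div_le_iff₀ hD, exp_neg, inv_mul_eq_div, le_div_iff₀ (exp_pos η), mul_comm]
    exact h
  linarith [(log_le_iff_le_exp (by positivity)).2 this]

lemma one_le_one_sub_log_div {t D : ℝ} (ht : 0 ≤ t) (htD : t ≤ D) :
    1 ≤ 1 - log (t / D) := by
  have := log_nonpos (div_nonneg ht (ht.trans htD)) (div_le_one_of_le₀ htD (ht.trans htD))
  linarith

lemma hasDerivAt_one_sub_log_div {t D : ℝ} (ht : t ≠ 0) (hD : D ≠ 0) :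
    HasDerivAt (fun t => 1 - log (t / D)) (-t⁻¹) t := by
  refine ((((hasDerivAt_id t).div_const D).log (div_ne_zero ht hD)).const_sub 1).congr_deriv ?_
  simp only [id]
  field_simp

variable {α β c D : ℝ}

lemma hasDerivAt_rpow_mul_one_sub_log_rpow {t : ℝ} (ht : 0 < t) (hD : D ≠ 0)
    (hL : 0 < 1 - log (t / D)) :
    HasDerivAt (fun t => c * t ^ (α + 1) * (1 - log (t / D)) ^ β)
      (c * t ^ α * (1 - log (t / D)) ^ (β - 1) * ((α + 1) * (1 - log (t / D)) - β)) t := by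
  have h1 := (hasDerivAt_rpow_const (p := α + 1) (Or.inl ht.ne')).const_mul c
  have h2 := (hasDerivAt_one_sub_log_div ht.ne' hD).rpow_const (p := β) (Or.inl hL.ne')
  refine (h1.mul h2).congr_deriv ?_
  rw [add_sub_cancel_right, rpow_add_one ht.ne', rpow_sub_one hL.ne']
  field_simp
  ring

lemma tendsto_rpow_mul_one_sub_log_div_rpow {a : ℝ} (ha : 0 < a) (hβ : 0 < β) (hD : 0 < D) :
    Tendsto (fun t => t ^ a * (1 - log (t / D)) ^ β) (𝓝[>] 0) (𝓝 0) := by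
  have hpow : Tendsto (fun t : ℝ => t ^ (a / β)) (𝓝[>] 0) (𝓝 0) := by
    simpa [zero_rpow (div_pos ha hβ).ne'] using
      ((continuousAt_rpow_const 0 (a / β) (Or.inr (div_pos ha hβ).le)).tendsto.mono_left
        nhdsWithin_le_nhds)
  have hbase : Tendsto (fun t => t ^ (a / β) * (1 + log D) - log t * t ^ (a / β))
      (𝓝[>] 0) (𝓝 0) := by
    simpa using (hpow.mul_const _).sub (tendsto_log_mul_rpow_nhdsGT_zero (div_pos ha hβ))
  have hlim := (continuousAt_rpow_const 0 β (Or.inr hβ.le)).tendsto.comp hbase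
  rw [zero_rpow hβ.ne'] at hlim
  refine hlim.congr' ?_
  filter_upwards [Ioo_mem_nhdsGT hD] with t ht
  have hL := one_le_one_sub_log_div ht.1.le ht.2.le
  have hfactor : t ^ (a / β) * (1 + log D) - log t * t ^ (a / β)
      = t ^ (a / β) * (1 - log (t / D)) := by
    rw [log_div ht.1.ne' hD.ne']
    ring
  rw [Function.comp_apply, hfactor, mul_rpow (rpow_nonneg ht.1.le _) (by linarith),
    ← rpow_mul ht.1.le, div_mul_cancel₀ a hβ.ne']

lemma continuousWithinAt_rpow_mul_one_sub_log_rpow_zero (hα : -1 < α) (hβ : 0 < β)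
    (hD : 0 < D) :
    ContinuousWithinAt (fun t => c * t ^ (α + 1) * (1 - log (t / D)) ^ β) (Ici 0) 0 := by
  rw [← continuousWithinAt_Ioi_iff_Ici, ContinuousWithinAt]
  have := (tendsto_rpow_mul_one_sub_log_div_rpow (by linarith : 0 < α + 1) hβ hD).const_mul c
  simpa [mul_assoc, zero_rpow (by linarith : α + 1 ≠ 0)] using this

theorem setIntegral_rpow_mul_one_sub_log_rpow_le (hα : -1 < α) (hβ : 0 < β) (hD : 0 < D)
    (hK : 0 < c * (α + 1) - 1) {x y : ℝ} (hy : 0 ≤ y) (hyx : y ≤ x)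
    (hL : ∀ t ∈ Ioc 0 x, c * β ≤ (c * (α + 1) - 1) * (1 - log (t / D))) :
    ∫ t in Ioo y x, t ^ α * (1 - log (t / D)) ^ β
      ≤ c * x ^ (α + 1) * (1 - log (x / D)) ^ β
        - c * y ^ (α + 1) * (1 - log (y / D)) ^ β := by
  have hc : 0 < c := by nlinarith
  have hLpos : ∀ t ∈ Ioc 0 x, 0 < 1 - log (t / D) := fun t ht =>
    pos_of_mul_pos_right ((mul_pos hc hβ).trans_le (hL t ht)) hK.le
  have hmem : ∀ t ∈ Ioo y x, t ∈ Ioc 0 x := fun t ht => ⟨hy.trans_lt ht.1, ht.2.le⟩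
  refine setIntegral_Ioo_le_sub_of_le_deriv hyx ?_
    (fun t ht => hasDerivAt_rpow_mul_one_sub_log_rpow (hmem t ht).1 hD.ne' (hLpos t (hmem t ht)))
    ?_ ?_ ?_
  · intro t ht
    rcases (hy.trans ht.1).eq_or_lt with rfl | ht0
    · exact (continuousWithinAt_rpow_mul_one_sub_log_rpow_zero hα hβ hD).mono
        fun s hs => hy.trans hs.1
    · exact (hasDerivAt_rpow_mul_one_sub_log_rpow ht0 hD.ne'
        (hLpos t ⟨ht0, ht.2⟩)).continuousAt.continuousWithinAt
  · intro t ht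
    obtain ⟨ht0, htx⟩ := hmem t ht
    exact ((continuousAt_id.rpow_const (Or.inl ht0.ne')).mul
      ((hasDerivAt_one_sub_log_div ht0.ne' hD.ne').continuousAt.rpow_const
        (Or.inl (hLpos t ⟨ht0, htx⟩).ne'))).continuousWithinAt
  · intro t ht
    exact mul_nonneg (rpow_nonneg (hmem t ht).1.le _) (rpow_nonneg (hLpos t (hmem t ht)).le _)
  · intro t ht
    obtain ⟨ht0, htx⟩ := hmem t ht
    have hLt := hLpos t ⟨ht0, htx⟩
    have hP : 0 ≤ t ^ α * (1 - log (t / D)) ^ (β - 1) :=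
      mul_nonneg (rpow_nonneg ht0.le _) (rpow_nonneg hLt.le _)
    have hkey : 1 - log (t / D) ≤ c * ((α + 1) * (1 - log (t / D)) - β) := by
      linarith [hL t ⟨ht0, htx⟩]
    calc t ^ α * (1 - log (t / D)) ^ β
        = t ^ α * (1 - log (t / D)) ^ (β - 1) * (1 - log (t / D)) := by
          rw [rpow_sub_one hLt.ne']
          field_simp
      _ ≤ t ^ α * (1 - log (t / D)) ^ (β - 1) * (c * ((α + 1) * (1 - log (t / D)) - β)) :=
          mul_le_mul_of_nonneg_left hkey hP
      _ = c * t ^ α * (1 - log (t / D)) ^ (β - 1) * ((α + 1) * (1 - log (t / D)) - β) := by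
          ring

lemma rpow_mul_one_sub_log_rpow_sub_le (hα : -1 < α) (hα' : α ≤ 0) (hβ : 0 < β)
    (hc : 0 ≤ c) (hD : 0 < D) {x y : ℝ} (hy : 0 ≤ y) (hyx : y ≤ x) (hxD : x ≤ D) :
    c * x ^ (α + 1) * (1 - log (x / D)) ^ β - c * y ^ (α + 1) * (1 - log (y / D)) ^ β
      ≤ c * (x - y) ^ (α + 1) * (1 - log ((x - y) / D)) ^ β := by
  have hLx : 0 ≤ 1 - log (x / D) :=
    zero_le_one.trans (one_le_one_sub_log_div (hy.trans hyx) hxD)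
  -- `log 0 = 0`, so `L` is antitone only on `(0, ∞)`; at `y = 0` (resp. `x = y`) the power
  -- factor vanishes instead.
  have hy_term :
      y ^ (α + 1) * (1 - log (x / D)) ^ β ≤ y ^ (α + 1) * (1 - log (y / D)) ^ β := by
    rcases hy.eq_or_lt with rfl | hy0
    · simp [zero_rpow (by linarith : α + 1 ≠ 0)]
    · gcongr
  have hxy_term : (x ^ (α + 1) - y ^ (α + 1)) * (1 - log (x / D)) ^ β
      ≤ (x - y) ^ (α + 1) * (1 - log ((x - y) / D)) ^ β := by
    rcases hyx.eq_or_lt with rfl | hxy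
    · simp [zero_rpow (by linarith : α + 1 ≠ 0)]
    · gcongr
      · exact rpow_sub_rpow_le_rpow_sub hy hyx (by linarith) (by linarith)
      · linarith
  calc c * x ^ (α + 1) * (1 - log (x / D)) ^ β - c * y ^ (α + 1) * (1 - log (y / D)) ^ β
      ≤ c * ((x ^ (α + 1) - y ^ (α + 1)) * (1 - log (x / D)) ^ β) := by
        nlinarith [mul_le_mul_of_nonneg_left hy_term hc]
    _ ≤ c * ((x - y) ^ (α + 1) * (1 - log ((x - y) / D)) ^ β) := by gcongr
    _ = c * (x - y) ^ (α + 1) * (1 - log ((x - y) / D)) ^ β := by ring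

end Real

/-- Lemma 2.5 (ii): with `X t = (1 - log t)⁻¹`, so `X^{-β}(t/D) = (1 - log (t/D))^β`. -/
theorem stmt_1 (α β R c : ℝ) (hα : -1 < α) (hα' : α ≤ 0) (hβ : 0 < β) (hR : 0 < R)
    (hc : 1 / (α + 1) < c) :
    ∃ η : ℝ, 0 ≤ η ∧
      ∀ D : ℝ, Real.exp η * R ≤ D → ∀ x y : ℝ, 0 ≤ y → y ≤ x → x ≤ R →
        ∫ t in Ioo y x, t ^ α * (1 - Real.log (t / D)) ^ β
          ≤ c * (x - y) ^ (α + 1) * (1 - Real.log ((x - y) / D)) ^ β := by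
  have hα1 : 0 < α + 1 := by linarith
  have hK : 0 < c * (α + 1) - 1 := by
    rw [div_lt_iff₀ hα1] at hc
    linarith
  have hc0 : 0 < c := lt_trans (by positivity) hc
  refine ⟨c * β / (c * (α + 1) - 1), by positivity, fun D hD x y hy hyx hxR => ?_⟩
  have hRD : R ≤ D := (le_mul_of_one_le_left hR.le (Real.one_le_exp (by positivity))).trans hD
  have hD0 : 0 < D := hR.trans_le hRD
  have hL : ∀ t ∈ Ioc 0 x, c * β ≤ (c * (α + 1) - 1) * (1 - Real.log (t / D)) := by
    intro t ht
    have hη := Real.add_le_one_sub_log_div ht.1 <|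
      (mul_le_mul_of_nonneg_left (ht.2.trans hxR) (Real.exp_pos _).le).trans hD
    calc c * β = (c * (α + 1) - 1) * (c * β / (c * (α + 1) - 1)) := by field_simp
      _ ≤ (c * (α + 1) - 1) * (1 - Real.log (t / D)) := by gcongr; linarith
  calc ∫ t in Ioo y x, t ^ α * (1 - Real.log (t / D)) ^ β
      ≤ c * x ^ (α + 1) * (1 - Real.log (x / D)) ^ β
        - c * y ^ (α + 1) * (1 - Real.log (y / D)) ^ β :=
        Real.setIntegral_rpow_mul_one_sub_log_rpow_le hα hβ hD0 hK hy hyx hL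
    _ ≤ c * (x - y) ^ (α + 1) * (1 - Real.log ((x - y) / D)) ^ β :=
        Real.rpow_mul_one_sub_log_rpow_sub_le hα hα' hβ hc0.le hD0 hy hyx (hxR.trans hRD)
end

section
/- Let $q > 1$, $\beta > 1-q$, $R > 0$, $D \geq R$, and $X(t) = (1-\log t)^{-1}$ for $t \in (0,1]$. Then there exists a constant $c = [(q-1)/(q-1+\beta)]^{1-1/q}$ such that for all $v \in C_c^{\infty}(0,R)$ and all $x \in (0,R)$, $|v(x)|\, X^{(\beta+q-1)/q}(x/D) \leq c \left(\int_0^R t^{q-1} |v'(t)|^q X^{\beta}(t/D)\, dt\right)^{1/q}$. -/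
open MeasureTheory Set

/-- Lemma 6.1: one-dimensional weighted pointwise estimate.  Here
`X t = (1 - log t)⁻¹`, so `X^γ (t/D) = (1 - log (t/D))^(-γ)`. -/
theorem stmt_5 (q β R D : ℝ) (hq : 1 < q) (hβ : 1 - q < β) (hR : 0 < R) (hD : R ≤ D)
    (v : ℝ → ℝ) (hv : ContDiff ℝ (⊤ : ℕ∞) v) (hvc : HasCompactSupport v)
    (hsupp : tsupport v ⊆ Ioo 0 R) :
    ∀ x ∈ Ioo (0 : ℝ) R,
      |v x| * (1 - Real.log (x / D)) ^ (-((β + q - 1) / q))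
        ≤ ((q - 1) / (q - 1 + β)) ^ (1 - 1 / q) *
          (∫ t in Ioo (0 : ℝ) R, t ^ (q - 1) * |deriv v t| ^ q
              * (1 - Real.log (t / D)) ^ (-β)) ^ (1 / q) := by
  rintro x ⟨hx0, hxR⟩
  have hq0 : (0:ℝ) < q := lt_trans one_pos hq
  have hq1 : (0:ℝ) < q - 1 := by linarith
  have hβ' : (0:ℝ) < q - 1 + β := by linarith
  have hD0 : (0:ℝ) < D := lt_of_lt_of_le hR hD
  set w : ℝ → ℝ := fun t => 1 - Real.log (t / D) with hw_def
  have hw1 : ∀ t : ℝ, 0 < t → t ≤ D → 1 ≤ w t := by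
    intro t ht htD
    have h := Real.log_nonpos (by positivity) ((div_le_one hD0).2 htD)
    simp only [hw_def]; linarith
  have hw_pos : ∀ t : ℝ, 0 < t → t ≤ D → 0 < w t := fun t ht htD =>
    lt_of_lt_of_le one_pos (hw1 t ht htD)
  have hwc : ContinuousOn w (Ioi (0:ℝ)) := by
    apply ContinuousOn.sub continuousOn_const
    apply Real.continuousOn_log.comp ((continuous_id.div_const D).continuousOn)
    intro t ht
    have : (0:ℝ) < t := ht
    simp only [mem_compl_iff, mem_singleton_iff]
    positivity
  have hw_deriv : ∀ t : ℝ, 0 < t → HasDerivAt w (-t⁻¹) t := by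
    intro t ht
    have h1 : HasDerivAt (fun s : ℝ => s / D) (1 / D) t := by
      simpa using (hasDerivAt_id t).div_const D
    have h2 : HasDerivAt (fun s : ℝ => Real.log (s / D)) ((t / D)⁻¹ * (1 / D)) t :=
      (Real.hasDerivAt_log (by positivity)).comp t h1
    have h3 : (t / D)⁻¹ * (1 / D) = t⁻¹ := by field_simp
    rw [h3] at h2
    simpa using h2.const_sub 1
  have hdiff : Differentiable ℝ v := hv.differentiable (by simp)
  have hdc : Continuous (deriv v) := hv.continuous_deriv (by simp)
  have hvR : v R = 0 := by
    apply image_eq_zero_of_notMem_tsupport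
    intro h
    exact (lt_irrefl R) (hsupp h).2
  -- Step A : |v x| ≤ ∫ |v'|
  have hvx : |v x| ≤ ∫ t in Ioc x R, |deriv v t| := by
    have hftc : ∫ t in x..R, deriv v t = v R - v x :=
      intervalIntegral.integral_deriv_eq_sub (fun t _ => hdiff t)
        (hdc.intervalIntegrable x R)
    have h1 : |∫ t in x..R, deriv v t| ≤ ∫ t in x..R, |deriv v t| :=
      intervalIntegral.abs_integral_le_integral_abs hxR.le
    rw [hftc, hvR, zero_sub, abs_neg] at h1
    calc |v x| ≤ |v x| := le_refl _
      _ ≤ ∫ t in Ioc x R, |deriv v t| := by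
          rwa [intervalIntegral.integral_of_le hxR.le] at h1
  -- the two Hölder factors
  set f : ℝ → ℝ := fun t => t ^ ((q-1)/q) * |deriv v t| * (w t) ^ (-β/q) with hf_def
  set g : ℝ → ℝ := fun t => t ^ (-((q-1)/q)) * (w t) ^ (β/q) with hg_def
  have hIcc : Icc x R ⊆ Ioi (0:ℝ) := fun t ht => lt_of_lt_of_le hx0 ht.1
  have hIccD : ∀ t ∈ Icc x R, t ≤ D := fun t ht => le_trans ht.2 hD
  have hfcont : ContinuousOn f (Icc x R) := by
    apply ContinuousOn.mul
    apply ContinuousOn.mul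
    · exact continuousOn_id.rpow_const fun t ht => Or.inl (ne_of_gt (hIcc ht))
    · exact hdc.abs.continuousOn
    · exact (hwc.mono hIcc).rpow_const fun t ht =>
        Or.inl (ne_of_gt (hw_pos t (hIcc ht) (hIccD t ht)))
  have hgcont : ContinuousOn g (Icc x R) := by
    apply ContinuousOn.mul
    · exact continuousOn_id.rpow_const fun t ht => Or.inl (ne_of_gt (hIcc ht))
    · exact (hwc.mono hIcc).rpow_const fun t ht =>
        Or.inl (ne_of_gt (hw_pos t (hIcc ht) (hIccD t ht)))
  set μ : Measure ℝ := volume.restrict (Ioc x R) with hμ_def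
  have hfin : IsFiniteMeasure μ := by
    constructor
    rw [hμ_def, Measure.restrict_apply_univ]
    exact measure_Ioc_lt_top
  have hmem : ∀ (h : ℝ → ℝ), ContinuousOn h (Icc x R) → ∀ p : ENNReal, MemLp h p μ := by
    intro h hc p
    obtain ⟨C, hC⟩ := isCompact_Icc.exists_bound_of_continuousOn hc
    have hm : AEStronglyMeasurable h μ :=
      (hc.mono Ioc_subset_Icc_self).aestronglyMeasurable measurableSet_Ioc
    refine MemLp.of_bound hm C ?_
    rw [hμ_def]
    exact (ae_restrict_iff' measurableSet_Ioc).2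
      (Filter.Eventually.of_forall fun t ht => hC t (Ioc_subset_Icc_self ht))
  have hconj : q.HolderConjugate (q/(q-1)) := Real.HolderConjugate.conjExponent hq
  have hf_nonneg : 0 ≤ᵐ[μ] f := by
    rw [hμ_def]
    refine (ae_restrict_iff' measurableSet_Ioc).2 (Filter.Eventually.of_forall fun t ht => ?_)
    have ht0 : (0:ℝ) < t := lt_trans hx0 ht.1
    have := hw_pos t ht0 (le_trans ht.2 hD)
    simp only [hf_def]
    positivity
  have hg_nonneg : 0 ≤ᵐ[μ] g := by
    rw [hμ_def]
    refine (ae_restrict_iff' measurableSet_Ioc).2 (Filter.Eventually.of_forall fun t ht => ?_)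
    have ht0 : (0:ℝ) < t := lt_trans hx0 ht.1
    have := hw_pos t ht0 (le_trans ht.2 hD)
    simp only [hg_def]
    positivity
  have holder := MeasureTheory.integral_mul_le_Lp_mul_Lq_of_nonneg hconj hf_nonneg hg_nonneg
    (hmem f hfcont _) (hmem g hgcont _)
  -- rewrite the product as |deriv v|
  have hfg : ∫ t, f t * g t ∂μ = ∫ t in Ioc x R, |deriv v t| := by
    rw [hμ_def]
    apply setIntegral_congr_fun measurableSet_Ioc
    intro t ht
    have ht0 : (0:ℝ) < t := lt_trans hx0 ht.1
    have hwt : (0:ℝ) < w t := hw_pos t ht0 (le_trans ht.2 hD)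
    have h1 : t ^ ((q-1)/q) * t ^ (-((q-1)/q)) = 1 := by
      rw [← Real.rpow_add ht0]; simp
    have h2 : (w t) ^ (-β/q) * (w t) ^ (β/q) = 1 := by
      rw [← Real.rpow_add hwt]; rw [neg_div]; simp
    simp only [hf_def, hg_def]
    calc t ^ ((q-1)/q) * |deriv v t| * (w t) ^ (-β/q) * (t ^ (-((q-1)/q)) * (w t) ^ (β/q))
        = (t ^ ((q-1)/q) * t ^ (-((q-1)/q))) * ((w t) ^ (-β/q) * (w t) ^ (β/q)) * |deriv v t| := by
          ring
      _ = |deriv v t| := by rw [h1, h2]; ring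
  set F : ℝ → ℝ := fun t => t ^ (q-1) * |deriv v t| ^ q * (w t) ^ (-β) with hF_def
  have hfq : ∫ t, f t ^ q ∂μ = ∫ t in Ioc x R, F t := by
    rw [hμ_def]
    apply setIntegral_congr_fun measurableSet_Ioc
    intro t ht
    have ht0 : (0:ℝ) < t := lt_trans hx0 ht.1
    have hwt : (0:ℝ) < w t := hw_pos t ht0 (le_trans ht.2 hD)
    have e1 : (q-1)/q * q = q - 1 := div_mul_cancel₀ _ hq0.ne'
    have e2 : (-β/q) * q = -β := by field_simp
    simp only [hf_def]
    rw [Real.mul_rpow (by positivity) (by positivity),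
        Real.mul_rpow (by positivity) (by positivity),
        ← Real.rpow_mul ht0.le, ← Real.rpow_mul hwt.le, e1, e2]
  -- rewrite g^(q/(q-1))
  have hgq : ∫ t, g t ^ (q/(q-1)) ∂μ
      = ∫ t in Ioc x R, t⁻¹ * (w t) ^ (β/(q-1)) := by
    rw [hμ_def]
    apply setIntegral_congr_fun measurableSet_Ioc
    intro t ht
    have ht0 : (0:ℝ) < t := lt_trans hx0 ht.1
    have hwt : (0:ℝ) < w t := hw_pos t ht0 (le_trans ht.2 hD)
    have e1 : -((q-1)/q) * (q/(q-1)) = -1 := by field_simp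
    have e2 : (β/q) * (q/(q-1)) = β/(q-1) := by field_simp
    simp only [hg_def]
    rw [Real.mul_rpow (by positivity) (by positivity),
        ← Real.rpow_mul ht0.le, ← Real.rpow_mul hwt.le, e1, e2, Real.rpow_neg_one]
  -- FTC for the second factor
  set a : ℝ := (β + q - 1)/(q - 1) with ha_def
  have hwR : (0:ℝ) < w R := hw_pos R hR hD
  have hwx : (0:ℝ) < w x := hw_pos x hx0 (le_trans hxR.le hD)
  have hFTC : ∫ t in Ioc x R, t⁻¹ * (w t) ^ (β/(q-1))
      = (q-1)/(q-1+β) * ((w x) ^ a - (w R) ^ a) := by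
    rw [← intervalIntegral.integral_of_le hxR.le]
    have hderiv : ∀ t ∈ uIcc x R,
        HasDerivAt (fun s => -((q-1)/(q-1+β)) * (w s) ^ a) (t⁻¹ * (w t) ^ (β/(q-1))) t := by
      intro t ht
      rw [uIcc_of_le hxR.le] at ht
      have ht0 : (0:ℝ) < t := hIcc ht
      have hwt : (0:ℝ) < w t := hw_pos t ht0 (hIccD t ht)
      have h2 : HasDerivAt (fun s => (w s) ^ a) ((-t⁻¹) * a * (w t) ^ (a-1)) t :=
        (hw_deriv t ht0).rpow_const (Or.inl hwt.ne')
      have h3 := h2.const_mul (-((q-1)/(q-1+β)))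
      convert h3 using 1
      case e'_4 => rfl
      case e'_5 => rfl
      have ea : a - 1 = β/(q-1) := by rw [ha_def]; field_simp; ring
      have hca : (q-1)/(q-1+β) * a = 1 := by rw [ha_def]; field_simp; ring
      rw [ea]
      linear_combination (-(t⁻¹ * (w t) ^ (β/(q-1)))) * hca
    have hint : IntervalIntegrable (fun t => t⁻¹ * (w t) ^ (β/(q-1))) volume x R := by
      apply ContinuousOn.intervalIntegrable
      rw [uIcc_of_le hxR.le]
      apply ContinuousOn.mul
      · exact continuousOn_id.inv₀ fun t ht => ne_of_gt (hIcc ht)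
      · exact (hwc.mono hIcc).rpow_const fun t ht =>
          Or.inl (ne_of_gt (hw_pos t (hIcc ht) (hIccD t ht)))
    rw [intervalIntegral.integral_eq_sub_of_hasDerivAt hderiv hint]
    ring
  have hC2 : ∫ t in Ioc x R, t⁻¹ * (w t) ^ (β/(q-1)) ≤ (q-1)/(q-1+β) * (w x) ^ a := by
    rw [hFTC]
    have h1 : (0:ℝ) ≤ (w R) ^ a := Real.rpow_nonneg hwR.le a
    have h2 : (0:ℝ) ≤ (q-1)/(q-1+β) := by positivity
    nlinarith
  -- integrability of the full integrand on Ioo 0 R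
  have hFsupp : Function.support F ⊆ tsupport v := by
    intro t ht
    by_contra hc
    apply ht
    have hz : deriv v t = 0 := by
      by_contra hd
      exact hc (support_deriv_subset hd)
    simp only [hF_def, hz, abs_zero, Real.zero_rpow hq0.ne']
    ring
  have hFcont : ContinuousOn F (tsupport v) := by
    have hsub : tsupport v ⊆ Ioi (0:ℝ) := fun t ht => (hsupp ht).1
    apply ContinuousOn.mul
    apply ContinuousOn.mul
    · exact continuousOn_id.rpow_const fun t ht => Or.inl (ne_of_gt (hsub ht))
    · exact (hdc.abs.continuousOn).rpow_const fun t ht => Or.inr hq0.le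
    · exact (hwc.mono hsub).rpow_const fun t ht =>
        Or.inl (ne_of_gt (hw_pos t (hsub ht) (le_trans (hsupp ht).2.le hD)))
  have hFglob : Integrable F :=
    (integrableOn_iff_integrable_of_support_subset hFsupp).1 (hFcont.integrableOn_compact hvc)
  have hFpt : ∀ t ∈ Ioc (0:ℝ) R, 0 ≤ F t := by
    intro t ht
    have ht0 : (0:ℝ) < t := ht.1
    have h1 : (0:ℝ) ≤ t ^ (q-1) := Real.rpow_nonneg ht0.le _
    have h2 : (0:ℝ) ≤ |deriv v t| ^ q := Real.rpow_nonneg (abs_nonneg _) _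
    have h3 : (0:ℝ) ≤ (w t) ^ (-β) := Real.rpow_nonneg (hw_pos t ht0 (le_trans ht.2 hD)).le _
    simp only [hF_def]
    positivity
  set I : ℝ := ∫ t in Ioo (0:ℝ) R, F t with hI_def
  have hIpos : 0 ≤ I :=
    setIntegral_nonneg measurableSet_Ioo (fun t ht => hFpt t (Ioo_subset_Ioc_self ht))
  have hImem : ∫ t in Ioc x R, F t ≤ I := by
    rw [hI_def, ← integral_Ioc_eq_integral_Ioo]
    refine setIntegral_mono_set hFglob.integrableOn ?_ ?_
    · exact (ae_restrict_iff' measurableSet_Ioc).2 (Filter.Eventually.of_forall hFpt)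
    · exact (Ioc_subset_Ioc_left hx0.le).eventuallyLE
  -- assemble
  have h1q : (1:ℝ)/(q/(q-1)) = 1 - 1/q := by field_simp
  have h1q' : (0:ℝ) ≤ 1 - 1/q := by
    have : 1/q ≤ 1 := by rw [div_le_one hq0]; linarith
    linarith
  have hG0 : 0 ≤ ∫ t in Ioc x R, t⁻¹ * (w t) ^ (β/(q-1)) := by
    apply setIntegral_nonneg measurableSet_Ioc
    intro t ht
    have ht0 : (0:ℝ) < t := lt_trans hx0 ht.1
    have hwt : (0:ℝ) < w t := hw_pos t ht0 (le_trans ht.2 hD)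
    positivity
  have hFq0 : 0 ≤ ∫ t in Ioc x R, F t :=
    setIntegral_nonneg measurableSet_Ioc
      (fun t ht => hFpt t (Ioc_subset_Ioc_left hx0.le ht))
  have ea2 : a * (1 - 1/q) = (β + q - 1)/q := by
    rw [ha_def]; field_simp
  have key : |v x| ≤ I ^ (1/q) *
      (((q-1)/(q-1+β)) ^ (1-1/q) * (w x) ^ ((β + q - 1)/q)) := by
    calc |v x| ≤ ∫ t, f t * g t ∂μ := by rw [hfg]; exact hvx
      _ ≤ (∫ t, f t ^ q ∂μ) ^ (1/q) * (∫ t, g t ^ (q/(q-1)) ∂μ) ^ (1/(q/(q-1))) := holder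
      _ ≤ I ^ (1/q) * (((q-1)/(q-1+β)) * (w x) ^ a) ^ (1-1/q) := by
          rw [hfq, hgq, h1q]
          apply mul_le_mul
          · exact Real.rpow_le_rpow hFq0 hImem (by positivity)
          · exact Real.rpow_le_rpow hG0 hC2 h1q'
          · exact Real.rpow_nonneg hG0 _
          · exact Real.rpow_nonneg hIpos _
      _ = I ^ (1/q) * (((q-1)/(q-1+β)) ^ (1-1/q) * (w x) ^ ((β + q - 1)/q)) := by
          rw [Real.mul_rpow (by positivity) (Real.rpow_nonneg hwx.le a),
            ← Real.rpow_mul hwx.le, ea2]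
  rw [Real.rpow_neg hwx.le, ← div_eq_mul_inv,
    div_le_iff₀ (Real.rpow_pos_of_pos hwx _)]
  exact le_of_le_of_eq key (by ring)
end
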